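/- Every subloop of a Cayley-Dickson loop Q_n has order 2^m for some m ≤ n+1; more generally, any n elements of a Cayley-Dickson loop generate a subloop of size 2^k with k ≤ n+1. -/

import Mathlib

/-- The underlying set of the Cayley-Dickson loop `Q n`:
`Q 0 = {±1}` (encoded as `Bool`, `false = 1`, `true = -1`) and `Q (n+1) = Q n × Bool`,
an element `(x, b)` encoding `(x, 0)` if `b = false` and `(x, 1)` if `b = true`. -/
def Q : ℕ → Type
  | 0 => Bool
  | n+1 => Q n × Bool

namespace Q

def one : ∀ n, Q n
  | 0 => false
  | n+1 => (one n, false)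

def neg : ∀ n, Q n → Q n
  | 0, x => !x
  | n+1, (x, b) => (neg n x, b)

def conj : ∀ n, Q n → Q n
  | 0, x => x
  | n+1, (x, false) => (conj n x, false)
  | n+1, (x, true) => (neg n x, true)

/-- Cayley-Dickson doubling multiplication restricted to the loop:
`(x,0)(y,0) = (xy,0)`, `(x,0)(y,1) = (yx,1)`, `(x,1)(y,0) = (xy*,1)`, `(x,1)(y,1) = (-y*x,0)`. -/
def mul : ∀ n, Q n → Q n → Q n
  | 0, x, y => xor x y
  | n+1, (x, false), (y, false) => (mul n x y, false)
  | n+1, (x, false), (y, true)  => (mul n y x, true)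
  | n+1, (x, true),  (y, false) => (mul n x (conj n y), true)
  | n+1, (x, true),  (y, true)  => (neg n (mul n (conj n y) x), false)

instance (n : ℕ) : One (Q n) := ⟨one n⟩
instance (n : ℕ) : Neg (Q n) := ⟨neg n⟩
instance (n : ℕ) : Mul (Q n) := ⟨mul n⟩
instance (n : ℕ) : Star (Q n) := ⟨conj n⟩
/-- In `Q n` the inverse of `x` is its conjugate `x*`. -/
instance (n : ℕ) : Inv (Q n) := ⟨conj n⟩

instance instDecEq : ∀ n, DecidableEq (Q n)
  | 0 => inferInstanceAs (DecidableEq Bool)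
  | n+1 => letI := instDecEq n; inferInstanceAs (DecidableEq (Q n × Bool))

instance instFintype : ∀ n, Fintype (Q n)
  | 0 => inferInstanceAs (Fintype Bool)
  | n+1 => letI := instFintype n; inferInstanceAs (Fintype (Q n × Bool))

/-- Powers in `Q n` (well defined by diassociativity). -/
def pow {n : ℕ} (x : Q n) : ℕ → Q n
  | 0 => 1
  | k+1 => x * pow x k

/-- The embedding `x ↦ (x, 0)` of `Q n` into `Q (n+1)`. -/
def up {n : ℕ} (x : Q n) : Q (n+1) := (x, false)

/-- The map `x ↦ (x, 1)` from `Q n` into `Q (n+1)`. -/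
def up1 {n : ℕ} (x : Q n) : Q (n+1) := (x, true)

/-- The commutator `[x,y]`, defined by `xy = (yx)[x,y]`. -/
def comm {n : ℕ} (x y : Q n) : Q n := (y * x)⁻¹ * (x * y)

/-- The associator `[x,y,z]`, defined by `(xy)z = (x(yz))[x,y,z]`. -/
def assoc {n : ℕ} (x y z : Q n) : Q n := (x * (y * z))⁻¹ * ((x * y) * z)

/-- A subloop of the Cayley-Dickson loop `Q n`: a subset containing `1` and closed
under multiplication and inverses (= conjugates). -/
structure Subloop (n : ℕ) where
  carrier : Set (Q n)
  one_mem : (1 : Q n) ∈ carrier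
  mul_mem : ∀ ⦃x y : Q n⦄, x ∈ carrier → y ∈ carrier → x * y ∈ carrier
  inv_mem : ∀ ⦃x : Q n⦄, x ∈ carrier → x⁻¹ ∈ carrier

/-- The subloop of `Q n` generated by a set `s`. -/
def closure (n : ℕ) (s : Set (Q n)) : Set (Q n) :=
  ⋂₀ {t : Set (Q n) | s ⊆ t ∧ (1 : Q n) ∈ t ∧
      (∀ x ∈ t, ∀ y ∈ t, x * y ∈ t) ∧ (∀ x ∈ t, x⁻¹ ∈ t)}

end Q

/-!
Forgetting signs, `x = ±e_v ↦ v` is a homomorphism `Q n → (ZMod 2)^n` whose fibres are the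
pairs `{x, -x}`. If a multiplicatively closed `S ∋ 1` contains `-1`, it is the full preimage of
its image, which is an `𝔽₂`-subspace, so `|S| = 2 · 2^d`. Otherwise `S = {1}`, because every
`x ≠ ±1` squares to `-1`. The image of the subloop generated by `s` lies in the span of the
image of `s`, so there `d ≤ |s|`.
-/

theorem ncard_eq_two_pow_finrank_of_add_mem {V : Type*} [AddCommGroup V] [Module (ZMod 2) V]
    [Finite V] {T : Set V} (h0 : 0 ∈ T) (hadd : ∀ a ∈ T, ∀ b ∈ T, a + b ∈ T) :
    T.ncard = 2 ^ T.finrank (ZMod 2) := by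
  let W : Submodule (ZMod 2) V :=
    { carrier := T
      zero_mem' := h0
      add_mem' := fun ha hb => hadd _ ha _ hb
      smul_mem' := fun c x hx => by
        obtain rfl | rfl := (by decide : ∀ c : ZMod 2, c = 0 ∨ c = 1) c
        · simpa using h0
        · simpa using hx }
  have hspan : Submodule.span (ZMod 2) T = W := Submodule.span_eq W
  rw [Set.finrank, hspan, ← Nat.card_coe_set_eq]
  change Nat.card W = _
  rw [Module.natCard_eq_pow_finrank (K := ZMod 2), Nat.card_zmod]

namespace Q

open Matrix

variable {n : ℕ}

@[elab_as_elim]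
def casesSucc {motive : Q (n+1) → Sort*} (up : ∀ x, motive (Q.up x))
    (up1 : ∀ x, motive (Q.up1 x)) : ∀ x, motive x
  | (x, false) => up x
  | (x, true) => up1 x

@[simp] lemma up_inj {x y : Q n} : up x = up y ↔ x = y :=
  ⟨congrArg Prod.fst, congrArg up⟩
@[simp] lemma up1_inj {x y : Q n} : up1 x = up1 y ↔ x = y :=
  ⟨congrArg Prod.fst, congrArg up1⟩

@[simp] lemma one_succ : (1 : Q (n+1)) = up 1 := rfl
@[simp] lemma neg_up (x : Q n) : -up x = up (-x) := rfl
@[simp] lemma neg_up1 (x : Q n) : -up1 x = up1 (-x) := rfl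
@[simp] lemma inv_up (x : Q n) : (up x)⁻¹ = up x⁻¹ := rfl
@[simp] lemma inv_up1 (x : Q n) : (up1 x)⁻¹ = up1 (-x) := rfl
@[simp] lemma up_mul_up (x y : Q n) : up x * up y = up (x * y) := rfl
@[simp] lemma up_mul_up1 (x y : Q n) : up x * up1 y = up1 (y * x) := rfl
@[simp] lemma up1_mul_up (x y : Q n) : up1 x * up y = up1 (x * y⁻¹) := rfl
@[simp] lemma up1_mul_up1 (x y : Q n) : up1 x * up1 y = up (-(y⁻¹ * x)) := rfl

@[simp] theorem neg_neg : ∀ {n} (x : Q n), -(-x) = x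
  | 0, x => by cases x <;> rfl
  | _+1, x => by cases x using casesSucc <;> simp [neg_neg]

@[simp] theorem inv_neg : ∀ {n} (x : Q n), (-x)⁻¹ = -x⁻¹
  | 0, _ => rfl
  | _+1, x => by cases x using casesSucc <;> simp [inv_neg]

@[simp] theorem inv_one : ∀ {n}, (1 : Q n)⁻¹ = 1
  | 0 => rfl
  | _+1 => by simp [inv_one]

mutual

@[simp] theorem neg_mul : ∀ {n} (x y : Q n), -x * y = -(x * y)
  | 0, x, y => by cases x <;> cases y <;> rfl
  | _+1, x, y => by
    cases x using casesSucc <;> cases y using casesSucc <;> simp [neg_mul, mul_neg]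

@[simp] theorem mul_neg : ∀ {n} (x y : Q n), x * -y = -(x * y)
  | 0, x, y => by cases x <;> cases y <;> rfl
  | _+1, x, y => by
    cases x using casesSucc <;> cases y using casesSucc <;> simp [neg_mul, mul_neg]

end

@[simp] theorem mul_one : ∀ {n} (x : Q n), x * 1 = x
  | 0, x => by cases x <;> rfl
  | _+1, x => by cases x using casesSucc <;> simp [mul_one]

@[simp] theorem one_mul : ∀ {n} (x : Q n), 1 * x = x
  | 0, x => by cases x <;> rfl
  | _+1, x => by cases x using casesSucc <;> simp [one_mul]

@[simp] theorem inv_mul_self : ∀ {n} (x : Q n), x⁻¹ * x = 1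
  | 0, x => by cases x <;> rfl
  | _+1, x => by cases x using casesSucc <;> simp [inv_mul_self]

theorem neg_one_mul (x : Q n) : -1 * x = -x := by simp

theorem eq_one_or_eq_neg_one_or_mul_self_eq_neg_one :
    ∀ {n} (x : Q n), x = 1 ∨ x = -1 ∨ x * x = -1
  | 0, x => by cases x; exacts [Or.inl rfl, Or.inr (Or.inl rfl)]
  | _+1, x => by
    cases x using casesSucc with
    | up x => simpa using eq_one_or_eq_neg_one_or_mul_self_eq_neg_one x
    | up1 x => simp

def index : ∀ {n}, Q n → Fin n → ZMod 2
  | 0, _ => 0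
  | _+1, (x, b) => vecCons (if b then 1 else 0) (index x)

def signBit : ∀ {n}, Q n → Bool
  | 0, x => x
  | _+1, (x, _) => signBit x

@[simp] lemma index_up (x : Q n) : index (up x) = vecCons 0 (index x) := rfl
@[simp] lemma index_up1 (x : Q n) : index (up1 x) = vecCons 1 (index x) := rfl
@[simp] lemma signBit_up (x : Q n) : signBit (up x) = signBit x := rfl
@[simp] lemma signBit_up1 (x : Q n) : signBit (up1 x) = signBit x := rfl

@[simp] theorem index_neg : ∀ {n} (x : Q n), index (-x) = index x
  | 0, _ => rfl
  | _+1, x => by cases x using casesSucc <;> simp [index_neg]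

@[simp] theorem index_inv : ∀ {n} (x : Q n), index x⁻¹ = index x
  | 0, _ => rfl
  | _+1, x => by cases x using casesSucc <;> simp [index_inv]

@[simp] theorem index_one : ∀ {n}, index (1 : Q n) = 0
  | 0 => Subsingleton.elim _ _
  | _+1 => by simp [index_one]

@[simp] theorem index_mul : ∀ {n} (x y : Q n), index (x * y) = index x + index y
  | 0, _, _ => Subsingleton.elim _ _
  | _+1, x, y => by
    cases x using casesSucc <;> cases y using casesSucc <;>
      simp [index_mul, add_comm, CharTwo.add_self_eq_zero]

@[simp] theorem signBit_neg : ∀ {n} (x : Q n), signBit (-x) = !signBit x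
  | 0, _ => rfl
  | _+1, x => by cases x using casesSucc <;> simp [signBit_neg]

theorem eq_or_eq_neg_of_index_eq : ∀ {n} {x y : Q n}, index x = index y → x = y ∨ x = -y
  | 0, x, y, _ => by cases x <;> cases y <;> first | exact Or.inl rfl | exact Or.inr rfl
  | _+1, x, y, h => by
    cases x using casesSucc <;> cases y using casesSucc <;>
      simp_all [vecCons_inj, eq_or_eq_neg_of_index_eq]

theorem index_signBit_injective : Function.Injective fun x : Q n => (index x, signBit x) := by
  intro x y h
  simp only [Prod.mk.injEq] at h
  rcases eq_or_eq_neg_of_index_eq h.1 with rfl | rfl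
  · rfl
  · simp at h

theorem eq_singleton_one_of_neg_one_notMem {S : Set (Q n)} (h1 : 1 ∈ S)
    (hsq : ∀ x ∈ S, x * x ∈ S) (hneg : -1 ∉ S) : S = {1} := by
  refine Set.eq_singleton_iff_unique_mem.mpr ⟨h1, fun x hx => ?_⟩
  rcases eq_one_or_eq_neg_one_or_mul_self_eq_neg_one x with rfl | rfl | hx2
  · rfl
  · exact absurd hx hneg
  · exact absurd (hx2 ▸ hsq x hx) hneg

theorem ncard_eq_two_mul_ncard_image_index {S : Set (Q n)} (hneg : ∀ x ∈ S, -x ∈ S) :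
    S.ncard = 2 * (index '' S).ncard := by
  have himage : (fun x => (index x, signBit x)) '' S = (index '' S) ×ˢ Set.univ := by
    refine Set.Subset.antisymm ?_ ?_
    · exact Set.image_subset_iff.mpr fun x hx => ⟨⟨x, hx, rfl⟩, trivial⟩
    rintro ⟨_, b⟩ ⟨⟨x, hx, rfl⟩, -⟩
    by_cases hb : signBit x = b
    · exact ⟨x, hx, Prod.ext rfl hb⟩
    · exact ⟨-x, hneg x hx, Prod.ext (index_neg x) (by cases b <;> simp_all)⟩
  rw [← Set.ncard_image_of_injective S index_signBit_injective, himage, Set.ncard_prod,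
    Set.ncard_univ, Nat.card_eq_fintype_card, Fintype.card_bool, mul_comm]

theorem ncard_eq_two_pow_of_one_mem_of_mul_mem {S : Set (Q n)} (h1 : 1 ∈ S)
    (hmul : ∀ x ∈ S, ∀ y ∈ S, x * y ∈ S) :
    ∃ j ≤ (index '' S).finrank (ZMod 2) + 1, S.ncard = 2 ^ j := by
  by_cases hneg : -1 ∈ S
  · have hadd : ∀ a ∈ index '' S, ∀ b ∈ index '' S, a + b ∈ index '' S := by
      rintro _ ⟨x, hx, rfl⟩ _ ⟨y, hy, rfl⟩
      exact ⟨x * y, hmul x hx y hy, index_mul x y⟩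
    have himage := ncard_eq_two_pow_finrank_of_add_mem (T := index '' S) ⟨1, h1, index_one⟩ hadd
    refine ⟨_, le_rfl, ?_⟩
    rw [ncard_eq_two_mul_ncard_image_index fun x hx => neg_one_mul x ▸ hmul _ hneg x hx, himage,
      pow_succ, mul_comm]
  · refine ⟨0, Nat.zero_le _, ?_⟩
    rw [eq_singleton_one_of_neg_one_notMem h1 (fun x hx => hmul x hx x hx) hneg,
      Set.ncard_singleton, pow_zero]

theorem one_mem_closure (s : Set (Q n)) : 1 ∈ closure n s := fun _ ht => ht.2.1

theorem mul_mem_closure {s : Set (Q n)} :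
    ∀ x ∈ closure n s, ∀ y ∈ closure n s, x * y ∈ closure n s :=
  fun x hx y hy t ht => ht.2.2.1 x (hx t ht) y (hy t ht)

theorem image_index_closure_subset_span (s : Set (Q n)) :
    index '' closure n s ⊆ Submodule.span (ZMod 2) (index '' s) := by
  rintro _ ⟨x, hx, rfl⟩
  refine hx (index ⁻¹' Submodule.span (ZMod 2) (index '' s)) ⟨?_, ?_, ?_, ?_⟩
  · exact fun y hy => Submodule.subset_span ⟨y, hy, rfl⟩
  · simp
  · intro a ha b hb
    simpa using add_mem ha hb
  · intro a ha
    simpa using ha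

theorem finrank_image_index_closure_le (s : Finset (Q n)) :
    (index '' closure n s).finrank (ZMod 2) ≤ s.card :=
  calc (index '' closure n s).finrank (ZMod 2)
      ≤ (index '' (s : Set (Q n))).finrank (ZMod 2) :=
        Submodule.finrank_mono <| Submodule.span_le.mpr <|
          image_index_closure_subset_span (s : Set (Q n))
    _ = (s.image index : Set (Fin n → ZMod 2)).finrank (ZMod 2) := by rw [Finset.coe_image]
    _ ≤ (s.image index).card := finrank_span_finset_le_card _
    _ ≤ s.card := Finset.card_image_le

end Q

/-- Every subloop of `Q n` has order `2^m` for some `m ≤ n+1`; more generally, any `k`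
elements of a Cayley-Dickson loop generate a subloop of size `2^j` with `j ≤ k+1`. -/
theorem Q.subloop_card_pow_two (n : ℕ) :
    (∀ S : Q.Subloop n, ∃ m ≤ n + 1, S.carrier.ncard = 2 ^ m) ∧
    (∀ s : Finset (Q n), ∃ j ≤ s.card + 1, (Q.closure n ↑s).ncard = 2 ^ j) := by
  refine ⟨fun S => ?_, fun s => ?_⟩
  · obtain ⟨m, hm, hcard⟩ :=
      Q.ncard_eq_two_pow_of_one_mem_of_mul_mem S.one_mem fun x hx y hy => S.mul_mem hx hy
    have hdim : (Q.index '' S.carrier).finrank (ZMod 2) ≤ n :=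
      (Submodule.finrank_le _).trans_eq (Module.finrank_fin_fun (ZMod 2))
    exact ⟨m, by omega, hcard⟩
  · obtain ⟨j, hj, hcard⟩ :=
      Q.ncard_eq_two_pow_of_one_mem_of_mul_mem (Q.one_mem_closure _) Q.mul_mem_closure
    have hdim := Q.finrank_image_index_closure_le s
    exact ⟨j, by omega, hcard⟩
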